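/- arXiv:2401.14929 — 2 statements merged into one kernel-verified Lean document; each statement's English description precedes it below -/
import Mathlib

section
/- Let G be a compact topological group, and let V be a real Banach space on which G acts continuously by linear isometries. Let n ≥ 1 and let ρ : Gⁿ → V be a continuous n-cocycle, i.e. δρ = 0 where δρ(s₀, …, sₙ) := s₀ • ρ(s₁, …, sₙ) + Σ_{i=1}^{n} (−1)^i ρ(s₀, …, s_{i−1} s_i, …, sₙ) + (−1)^{n+1} ρ(s₀, …, s_{n−1}). Then there exists a continuous map α : Gⁿ⁻¹ → V with ρ = δα (where for n = 1, α is a constant x ∈ V and δx(s) = s • x − x). In other words, the continuous group cohomology Hⁿ(G; V) vanishes for n ≥ 1. -/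
/-! Average over the normalized Haar measure in the last variable: put
`α u = (-1)^(m+1) ∫ ρ (u, t) dt`. Evaluate `δρ = 0` at `(s, t)` and integrate in `t`. The
face `ρ (s₀, …, sₘ₋₁, sₘ t)` has, by left invariance, the same integral as
`ρ (s₀, …, sₘ₋₁, t)`, the remaining terms but the last integrate to the terms of `δα`, and
the last face `ρ s` does not depend on `t`; this leaves `δα = ρ`. Continuity of `α` follows
from compactness, by integrating `t ↦ ρ (·, t)` as a `C(Gᵐ, V)`-valued function. -/

open MeasureTheory

/-- The inhomogeneous coboundary operator on continuous cochains:
`δρ(s₀,…,sₙ) = s₀ • ρ(s₁,…,sₙ) + Σ_{i=1}^{n} (-1)^i ρ(s₀,…,s_{i-1}s_i,…,sₙ)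
  + (-1)^{n+1} ρ(s₀,…,s_{n-1})`.
For `n = 0` this reads `δx(s) = s • x - x` with `x` the value of `ρ` on the empty tuple. -/
def coboundary {G : Type*} [Group G] {V : Type*} [NormedAddCommGroup V] [NormedSpace ℝ V]
    (σ : G →* (V ≃ₗᵢ[ℝ] V)) (n : ℕ) (ρ : (Fin n → G) → V) :
    (Fin (n + 1) → G) → V := fun s =>
  σ (s 0) (ρ fun i => s i.succ)
    + ∑ i : Fin n, ((-1 : ℝ) ^ (i.val + 1)) •
        ρ (fun j => if j.val < i.val then s j.castSucc
            else if j.val = i.val then s j.castSucc * s j.succ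
            else s j.succ)
    + ((-1 : ℝ) ^ (n + 1)) • ρ (fun j => s j.castSucc)

theorem continuous_parametric_integral_of_compactSpace {X Y E : Type*} [TopologicalSpace X]
    [CompactSpace X] [MeasurableSpace X] [OpensMeasurableSpace X] [TopologicalSpace Y]
    [CompactSpace Y] [NormedAddCommGroup E] [NormedSpace ℝ E] [CompleteSpace E]
    (μ : Measure X) [IsFiniteMeasure μ] {f : Y → X → E} (hf : Continuous (Function.uncurry f)) :
    Continuous fun y => ∫ x, f y x ∂μ := by
  let F : C(X, C(Y, E)) := ContinuousMap.curry ⟨fun p => f p.2 p.1, hf.comp continuous_swap⟩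
  have hF : Integrable F μ := F.continuous.integrable_of_hasCompactSupport (.of_compactSpace _)
  have hF_apply : (fun y => ∫ x, f y x ∂μ) = ⇑(∫ x, F x ∂μ) :=
    funext fun y => (ContinuousMap.integral_apply hF y).symm
  exact hF_apply ▸ (∫ x, F x ∂μ).continuous

theorem isProbabilityMeasure_haarMeasure_top {G : Type*} [Group G] [TopologicalSpace G]
    [IsTopologicalGroup G] [CompactSpace G] [MeasurableSpace G] [BorelSpace G] :
    IsProbabilityMeasure (Measure.haarMeasure (⊤ : TopologicalSpace.PositiveCompacts G)) :=
  ⟨by simpa using Measure.haarMeasure_self (K₀ := (⊤ : TopologicalSpace.PositiveCompacts G))⟩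

section Coboundary

variable {G : Type*} [Group G] {V : Type*} [NormedAddCommGroup V] [NormedSpace ℝ V]
  (σ : G →* (V ≃ₗᵢ[ℝ] V))

theorem coboundary_smul (n : ℕ) (c : ℝ) (ρ : (Fin n → G) → V) :
    coboundary σ n (c • ρ) = c • coboundary σ n ρ := by
  funext s
  simp only [coboundary, Pi.smul_apply, map_smul, smul_add, Finset.smul_sum, smul_comm c]

theorem coboundary_snoc (m : ℕ) (ρ : (Fin (m + 1) → G) → V) (s : Fin (m + 1) → G) (t : G) :
    coboundary σ (m + 1) ρ (Fin.snoc s t) =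
      coboundary σ m (fun u => ρ (Fin.snoc u t)) s
        + (-1 : ℝ) ^ (m + 1) • (ρ (Fin.snoc (Fin.init s) (s (Fin.last m) * t))
          - ρ (Fin.snoc (Fin.init s) t))
        + (-1 : ℝ) ^ m • ρ s := by
  have face_last : (fun j : Fin (m + 1) =>
      if j.val < m then (Fin.snoc s t : Fin (m + 2) → G) j.castSucc
      else if j.val = m then
        (Fin.snoc s t : Fin (m + 2) → G) j.castSucc * (Fin.snoc s t : Fin (m + 2) → G) j.succ
      else (Fin.snoc s t : Fin (m + 2) → G) j.succ)
      = Fin.snoc (Fin.init s) (s (Fin.last m) * t) := by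
    funext j
    induction j using Fin.lastCases with
    | last => simp
    | cast k => simp [Fin.init, k.isLt]
  have face (i : Fin m) : (fun j : Fin (m + 1) =>
      if j.val < i.val then (Fin.snoc s t : Fin (m + 2) → G) j.castSucc
      else if j.val = i.val then
        (Fin.snoc s t : Fin (m + 2) → G) j.castSucc * (Fin.snoc s t : Fin (m + 2) → G) j.succ
      else (Fin.snoc s t : Fin (m + 2) → G) j.succ)
      = Fin.snoc (fun j : Fin m => if j.val < i.val then s j.castSucc
          else if j.val = i.val then s j.castSucc * s j.succ else s j.succ) t := by
    funext j
    induction j using Fin.lastCases with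
    | last => simp [(i.isLt).ne']
    | cast k => simp only [Fin.snoc_castSucc, Fin.succ_castSucc, Fin.val_castSucc]
  have head : (Fin.snoc s t : Fin (m + 2) → G) 0 = s 0 := by simp
  have tail : (fun i : Fin (m + 1) => (Fin.snoc s t : Fin (m + 2) → G) i.succ)
      = Fin.snoc (fun i => s i.succ) t := by
    funext i
    induction i using Fin.lastCases with
    | last => simp
    | cast k => simp only [Fin.snoc_castSucc, Fin.succ_castSucc]
  simp only [coboundary, Fin.sum_univ_castSucc, Fin.val_castSucc, Fin.val_last]
  rw [face_last, head, tail]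
  simp only [face]
  simp only [Fin.snoc_castSucc, ← Fin.init_def]
  rw [pow_succ _ (m + 1)]
  module

theorem integrable_coboundary {X : Type*} [MeasurableSpace X] (μ : Measure X) (n : ℕ)
    (f : X → (Fin n → G) → V) (hf : ∀ u, Integrable (fun x => f x u) μ) (s : Fin (n + 1) → G) :
    Integrable (fun x => coboundary σ n (f x) s) μ :=
  (((σ (s 0)).integrable_comp_iff.2 (hf _)).add
    (integrable_finsetSum _ fun _ _ => (hf _).smul _)).add ((hf _).smul _)

theorem integral_coboundary {X : Type*} [MeasurableSpace X] (μ : Measure X) (n : ℕ)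
    (f : X → (Fin n → G) → V) (hf : ∀ u, Integrable (fun x => f x u) μ) (s : Fin (n + 1) → G) :
    ∫ x, coboundary σ n (f x) s ∂μ = coboundary σ n (fun u => ∫ x, f x u ∂μ) s := by
  have h_head : Integrable (fun x => σ (s 0) (f x fun i => s i.succ)) μ :=
    (σ (s 0)).integrable_comp_iff.2 (hf _)
  simp only [coboundary]
  rw [integral_add, integral_add, integral_finsetSum]
  · simp only [integral_smul]
    congr 2
    exact (σ (s 0)).toContinuousLinearEquiv.integral_comp_comm _
  all_goals first
    | exact h_head
    | exact h_head.add (integrable_finsetSum _ fun i _ => (hf _).smul _)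
    | fun_prop

theorem eq_coboundary_integral_of_coboundary_eq_zero [CompleteSpace V] [MeasurableSpace G]
    [MeasurableMul G] (μ : Measure G) [IsProbabilityMeasure μ] [μ.IsMulLeftInvariant] (m : ℕ)
    (ρ : (Fin (m + 1) → G) → V) (hρ : ∀ u, Integrable (fun t => ρ (Fin.snoc u t)) μ)
    (hcoc : coboundary σ (m + 1) ρ = 0) :
    ρ = coboundary σ m ((-1 : ℝ) ^ (m + 1) • fun u => ∫ t, ρ (Fin.snoc u t) ∂μ) := by
  funext s
  have h_shift := (hρ (Fin.init s)).comp_mul_left (s (Fin.last m))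
  have h_face := integrable_coboundary σ μ m _ hρ s
  have h_diff : Integrable (fun t => (-1 : ℝ) ^ (m + 1) •
      (ρ (Fin.snoc (Fin.init s) (s (Fin.last m) * t)) - ρ (Fin.snoc (Fin.init s) t))) μ :=
    (h_shift.sub (hρ _)).smul _
  -- by left invariance of `μ` the difference of the two faces of `Fin.snoc s t` that retain `t`
  -- integrates to zero
  have key : coboundary σ m (fun u => ∫ t, ρ (Fin.snoc u t) ∂μ) s + (-1 : ℝ) ^ m • ρ s = 0 :=
    calc _ = ∫ t, coboundary σ m (fun u => ρ (Fin.snoc u t)) s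
          + (-1 : ℝ) ^ (m + 1) • (ρ (Fin.snoc (Fin.init s) (s (Fin.last m) * t))
            - ρ (Fin.snoc (Fin.init s) t)) + (-1 : ℝ) ^ m • ρ s ∂μ := by
          rw [integral_add _ (integrable_const _), integral_add h_face h_diff,
            integral_coboundary σ μ m _ hρ,
            integral_smul, integral_sub h_shift (hρ _),
            integral_mul_left_eq_self (fun t => ρ (Fin.snoc (Fin.init s) t)), sub_self, smul_zero,
            add_zero, integral_const, probReal_univ, one_smul]
          exact h_face.add h_diff
      _ = ∫ t, coboundary σ (m + 1) ρ (Fin.snoc s t) ∂μ := by simp only [coboundary_snoc]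
      _ = 0 := by simp [hcoc]
  rw [coboundary_smul, Pi.smul_apply, eq_neg_of_add_eq_zero_left key, smul_neg, smul_smul,
    ← neg_smul]
  simp [pow_succ, ← mul_pow]

end Coboundary

theorem continuous_cohomology_vanishes_general {G : Type*} [Group G] [TopologicalSpace G]
    [IsTopologicalGroup G] [CompactSpace G]
    {V : Type*} [NormedAddCommGroup V] [NormedSpace ℝ V] [CompleteSpace V]
    (σ : G →* (V ≃ₗᵢ[ℝ] V))
    (m : ℕ) (ρ : (Fin (m + 1) → G) → V) (hρ : Continuous ρ)
    (hcoc : coboundary σ (m + 1) ρ = 0) :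
    ∃ α : (Fin m → G) → V, Continuous α ∧ ρ = coboundary σ m α := by
  borelize G
  have := isProbabilityMeasure_haarMeasure_top (G := G)
  have hρ_snoc : Continuous fun p : (Fin m → G) × G => ρ (Fin.snoc p.1 p.2) :=
    hρ.comp (Continuous.finSnoc (A := fun _ => G) continuous_fst continuous_snd)
  refine ⟨_, ?_, eq_coboundary_integral_of_coboundary_eq_zero σ (Measure.haarMeasure ⊤) m ρ
    (fun u => (hρ_snoc.comp (Continuous.prodMk_right u)).integrable_of_hasCompactSupport
      (.of_compactSpace _)) hcoc⟩
  exact (continuous_parametric_integral_of_compactSpace _ hρ_snoc).const_smul _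

/-- For a compact group `G` acting continuously by linear isometries on a
real Banach space `V`, every continuous `n`-cocycle (`n = m + 1 ≥ 1`) is the coboundary of
a continuous `(n-1)`-cochain: the continuous group cohomology `Hⁿ(G; V)` vanishes for
`n ≥ 1`. -/
theorem continuous_cohomology_vanishes {G : Type*} [Group G] [TopologicalSpace G]
    [IsTopologicalGroup G] [CompactSpace G]
    {V : Type*} [NormedAddCommGroup V] [NormedSpace ℝ V] [CompleteSpace V]
    (σ : G →* (V ≃ₗᵢ[ℝ] V)) (hσ : Continuous fun p : G × V => σ p.1 p.2)
    (m : ℕ) (ρ : (Fin (m + 1) → G) → V) (hρ : Continuous ρ)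
    (hcoc : coboundary σ (m + 1) ρ = 0) :
    ∃ α : (Fin m → G) → V, Continuous α ∧ ρ = coboundary σ m α :=
  continuous_cohomology_vanishes_general σ m ρ hρ hcoc
end

section
/- Let G be a compact topological group with Haar probability measure μ, and let V be a real Banach space on which G acts continuously by linear isometries. Let β : G × G → V be continuous with sup_{s,t,u} ‖s • β(t,u) − β(st,u) + β(s,tu) − β(s,t)‖ ≤ ε for some ε ≥ 0 (β is an almost-2-cocycle). Then there exist a continuous map α : G → V such that the coboundary δα(s,t) := s • α(t) − α(st) + α(s) satisfies sup_{s,t} ‖β(s,t) − (−δα)(s,t)‖ ≤ ε; in particular every continuous almost-2-cocycle is uniformly close (within its cocycle defect) to an actual continuous 2-coboundary, hence to a 2-cocycle. -/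
open MeasureTheory Function

/-! Take `α s := -∫ β(s, u) dμ(u)`. Integrating the defect
`s • β(t,u) - β(st,u) + β(s,tu) - β(s,t)` over `u` gives exactly `-(β(s,t) + δα(s,t))`, because
`s •` commutes with the integral and `∫ β(s, tu) dμ(u) = ∫ β(s, u) dμ(u)` by left invariance;
and a probability average of vectors of norm `≤ ε` has norm `≤ ε`. -/

section ParametricIntegral

variable {X Y E : Type*} [TopologicalSpace X] [TopologicalSpace Y] [CompactSpace Y]
  [MeasurableSpace Y] [OpensMeasurableSpace Y] (μ : Measure Y) [IsFiniteMeasure μ]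
  [NormedAddCommGroup E]

theorem Continuous.integrable_of_compactSpace {f : Y → E} (hf : Continuous f) :
    Integrable f μ :=
  hf.integrable_of_hasCompactSupport (HasCompactSupport.of_compactSpace f)

variable [NormedSpace ℝ E]

theorem ContinuousMap.lipschitzWith_integral :
    LipschitzWith (measureUnivNNReal μ) fun f : C(Y, E) => ∫ y, f y ∂μ := by
  refine LipschitzWith.of_dist_le_mul fun f g => ?_
  rw [dist_eq_norm, dist_eq_norm, ← integral_sub (f.continuous.integrable_of_compactSpace μ)
    (g.continuous.integrable_of_compactSpace μ)]
  exact (norm_integral_le_of_norm_le_const (.of_forall (f - g).norm_coe_le_norm)).trans_eq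
    (mul_comm _ _)

theorem continuous_integral_of_continuous_uncurry {f : X → Y → E}
    (hf : Continuous (uncurry f)) : Continuous fun x => ∫ y, f x y ∂μ :=
  (ContinuousMap.lipschitzWith_integral μ).continuous.comp
    (ContinuousMap.curry ⟨uncurry f, hf⟩).continuous

end ParametricIntegral

section TwoCocycleDefect

variable {G : Type*} [Group G] [TopologicalSpace G] [ContinuousMul G] [CompactSpace G]
  [MeasurableSpace G] [BorelSpace G] (μ : Measure G) [μ.IsMulLeftInvariant]
  [IsProbabilityMeasure μ] {V : Type*} [NormedAddCommGroup V] [NormedSpace ℝ V] [CompleteSpace V]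

theorem integral_twoCocycleDefect (ρ : G → V →L[ℝ] V) {β : G → G → V}
    (hβ : Continuous (uncurry β)) (s t : G) :
    ∫ u, (ρ s (β t u) - β (s * t) u + β s (t * u) - β s t) ∂μ =
      ρ s (∫ u, β t u ∂μ) - ∫ u, β (s * t) u ∂μ + ∫ u, β s u ∂μ - β s t := by
  have hβ_int : ∀ r, Integrable (fun u => β r u) μ := fun r =>
    (hβ.comp (continuous_const.prodMk continuous_id)).integrable_of_compactSpace μ
  have h₁ : Integrable (fun u => ρ s (β t u)) μ := (ρ s).integrable_comp (hβ_int t)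
  have h₂ : Integrable (fun u => ρ s (β t u) - β (s * t) u) μ := h₁.sub (hβ_int _)
  have h₃ : Integrable (fun u => β s (t * u)) μ :=
    (hβ.comp (continuous_const.prodMk (continuous_const_mul t))).integrable_of_compactSpace μ
  have h₄ : Integrable (fun u => ρ s (β t u) - β (s * t) u + β s (t * u)) μ := h₂.add h₃
  rw [integral_sub h₄ (integrable_const _), integral_add h₂ h₃,
    integral_sub h₁ (hβ_int _),
    (ρ s).integral_comp_comm (hβ_int t), integral_mul_left_eq_self (β s) t, integral_const,
    probReal_univ, one_smul]

end TwoCocycleDefect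

theorem almost_two_cocycle_near_coboundary_general {G : Type*} [Group G] [TopologicalSpace G]
    [IsTopologicalGroup G] [CompactSpace G] [MeasurableSpace G] [BorelSpace G]
    (μ : Measure G) [μ.IsHaarMeasure] [IsProbabilityMeasure μ]
    {V : Type*} [NormedAddCommGroup V] [NormedSpace ℝ V] [CompleteSpace V]
    (σ : G →* (V ≃ₗᵢ[ℝ] V))
    (β : G → G → V) (hβ : Continuous fun p : G × G => β p.1 p.2)
    (ε : ℝ)
    (hdef : ∀ s t u : G,
      ‖σ s (β t u) - β (s * t) u + β s (t * u) - β s t‖ ≤ ε) :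
    ∃ α : G → V, Continuous α ∧
      ∀ s t : G, ‖β s t - (-(σ s (α t) - α (s * t) + α s))‖ ≤ ε := by
  refine ⟨fun s => -∫ u, β s u ∂μ, (continuous_integral_of_continuous_uncurry μ hβ).neg,
    fun s t => ?_⟩
  have hdefect := integral_twoCocycleDefect μ
    (fun s => (σ s).toContinuousLinearEquiv.toContinuousLinearMap) hβ s t
  simp only [ContinuousLinearEquiv.coe_coe, LinearIsometryEquiv.coe_toContinuousLinearEquiv]
    at hdefect
  calc ‖β s t - -(σ s (-∫ u, β t u ∂μ) - -∫ u, β (s * t) u ∂μ + -∫ u, β s u ∂μ)‖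
      = ‖∫ u, (σ s (β t u) - β (s * t) u + β s (t * u) - β s t) ∂μ‖ := by
        rw [← norm_neg, hdefect, map_neg]
        congr 1
        abel
    _ ≤ ε := by
        simpa using norm_integral_le_of_norm_le_const (μ := μ) (.of_forall (hdef s t))

/-- Let `G` be a compact group with Haar probability measure `μ`,
acting continuously by linear isometries on a real Banach space `V`. If `β : G × G → V`
is a continuous almost-2-cocycle with defect at most `ε`, i.e.
`‖s • β(t,u) - β(st,u) + β(s,tu) - β(s,t)‖ ≤ ε` for all `s, t, u`, then there is a
continuous `α : G → V` such that `β` is uniformly within `ε` of the 2-coboundary `-δα`,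
where `δα(s,t) = s • α(t) - α(st) + α(s)`. -/
theorem almost_two_cocycle_near_coboundary {G : Type*} [Group G] [TopologicalSpace G]
    [IsTopologicalGroup G] [CompactSpace G] [MeasurableSpace G] [BorelSpace G]
    (μ : Measure G) [μ.IsHaarMeasure] [IsProbabilityMeasure μ]
    {V : Type*} [NormedAddCommGroup V] [NormedSpace ℝ V] [CompleteSpace V]
    (σ : G →* (V ≃ₗᵢ[ℝ] V)) (hσ : Continuous fun p : G × V => σ p.1 p.2)
    (β : G → G → V) (hβ : Continuous fun p : G × G => β p.1 p.2)
    (ε : ℝ) (hε : 0 ≤ ε)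
    (hdef : ∀ s t u : G,
      ‖σ s (β t u) - β (s * t) u + β s (t * u) - β s t‖ ≤ ε) :
    ∃ α : G → V, Continuous α ∧
      ∀ s t : G, ‖β s t - (-(σ s (α t) - α (s * t) + α s))‖ ≤ ε :=
  almost_two_cocycle_near_coboundary_general μ σ β hβ ε hdef
end
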